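/- arXiv:2401.11130 — 3 statements merged into one kernel-verified Lean document; each statement's English description precedes it below -/
import Mathlib

section
/- Let A and B be integrable real-valued random variables on a probability space (Ω, ℱ, ℙ), with cumulative distribution functions F_A(x) = ℙ(A ≤ x) and F_B(x) = ℙ(B ≤ x). Let g : ℝ → ℝ be differentiable at every point with derivative g' measurable and bounded. Then x ↦ (F_A(x) − F_B(x))·g'(x) is Lebesgue integrable on ℝ and 𝔼[g(B)] − 𝔼[g(A)] = ∫_ℝ (F_A(x) − F_B(x))·g'(x) dx. -/
/-!
Put `F(ω, x) = (𝟙[A ω ≤ x] - 𝟙[B ω ≤ x]) g'(x)`. For fixed `ω` this is `±g'` on the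
interval between `A ω` and `B ω`, so by the fundamental theorem of calculus its `dx`-integral
is `g (B ω) - g (A ω)`; for fixed `x` its expectation is `(F_A x - F_B x) g'(x)`. Since
`|F(ω, x)|` integrates in `x` to at most `C |A ω - B ω|`, `F` is integrable on `Ω × ℝ`,
and Fubini's theorem equates the two iterated integrals.
-/

open MeasureTheory Set

lemma indicator_Ici_sub_indicator_Ici_mul (a b x : ℝ) (f : ℝ → ℝ) :
    ((Ici a).indicator 1 x - (Ici b).indicator 1 x) * f x
      = (Ico a b).indicator f x - (Ico b a).indicator f x := by
  simp only [indicator_apply, mem_Ici, mem_Ico, Pi.one_apply]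
  split_ifs <;> grind

lemma abs_indicator_Ici_sub_indicator_Ici (a b x : ℝ) :
    |(Ici a).indicator 1 x - (Ici b).indicator 1 x|
      = (Ico (min a b) (max a b)).indicator (1 : ℝ → ℝ) x := by
  simp only [indicator_apply, mem_Ici, mem_Ico, Pi.one_apply, min_le_iff, lt_max_iff]
  split_ifs <;> grind

lemma integral_indicator_Ici_sub_indicator_Ici_mul {f : ℝ → ℝ} {a b : ℝ}
    (hf : IntervalIntegrable f volume a b) :
    ∫ x, ((Ici a).indicator 1 x - (Ici b).indicator 1 x) * f x = ∫ x in a..b, f x := by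
  have hIco : ∀ {s t : ℝ}, IntegrableOn f (Ioc s t) → Integrable ((Ico s t).indicator f) :=
    fun h => (integrable_indicator_iff measurableSet_Ico).2
      ((integrableOn_Icc_iff_integrableOn_Ioc).2 h |>.mono_set Ico_subset_Icc_self)
  simp_rw [indicator_Ici_sub_indicator_Ici_mul]
  rw [integral_sub (hIco hf.1) (hIco hf.2), integral_indicator measurableSet_Ico,
    integral_indicator measurableSet_Ico, integral_Ico_eq_integral_Ioc,
    integral_Ico_eq_integral_Ioc, intervalIntegral]

section BoundedFactor

variable {f : ℝ → ℝ} {C : ℝ}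

lemma norm_indicator_Ici_sub_indicator_Ici_mul_le (hf : ∀ x, |f x| ≤ C) (a b x : ℝ) :
    ‖((Ici a).indicator 1 x - (Ici b).indicator 1 x) * f x‖
      ≤ C * (Ico (min a b) (max a b)).indicator 1 x := by
  rw [Real.norm_eq_abs, abs_mul, abs_indicator_Ici_sub_indicator_Ici, mul_comm]
  exact mul_le_mul_of_nonneg_right (hf x) (indicator_nonneg (fun _ _ => zero_le_one) x)

lemma integrable_const_mul_indicator_Ico (a b : ℝ) :
    Integrable (fun x => C * (Ico a b).indicator (1 : ℝ → ℝ) x) :=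
  ((integrable_indicator_iff measurableSet_Ico).2
    (integrableOn_const measure_Ico_lt_top.ne)).const_mul C

lemma integrable_indicator_Ici_sub_indicator_Ici_mul (hfm : AEStronglyMeasurable f)
    (hf : ∀ x, |f x| ≤ C) (a b : ℝ) :
    Integrable (fun x => ((Ici a).indicator 1 x - (Ici b).indicator 1 x) * f x) :=
  (integrable_const_mul_indicator_Ico _ _).mono'
    ((((measurable_const.indicator measurableSet_Ici).sub
      (measurable_const.indicator measurableSet_Ici)).aestronglyMeasurable).mul hfm)
    (ae_of_all _ (norm_indicator_Ici_sub_indicator_Ici_mul_le hf a b))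

lemma integral_norm_indicator_Ici_sub_indicator_Ici_mul_le (hfm : AEStronglyMeasurable f)
    (hf : ∀ x, |f x| ≤ C) (a b : ℝ) :
    ∫ x, ‖((Ici a).indicator 1 x - (Ici b).indicator 1 x) * f x‖ ≤ C * |a - b| :=
  calc ∫ x, ‖((Ici a).indicator 1 x - (Ici b).indicator 1 x) * f x‖
      ≤ ∫ x, C * (Ico (min a b) (max a b)).indicator 1 x :=
        integral_mono (integrable_indicator_Ici_sub_indicator_Ici_mul hfm hf a b).norm
          (integrable_const_mul_indicator_Ico _ _)
          fun x => norm_indicator_Ici_sub_indicator_Ici_mul_le hf a b x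
    _ = C * |a - b| := by
        rw [integral_const_mul, integral_indicator_one measurableSet_Ico, Real.volume_real_Ico,
          max_sub_min_eq_abs', max_eq_left (abs_nonneg _)]

lemma intervalIntegrable_of_abs_le (hfm : AEStronglyMeasurable f)
    (hf : ∀ x, |f x| ≤ C) (a b : ℝ) : IntervalIntegrable f volume a b :=
  intervalIntegrable_iff.2 <|
    Measure.integrableOn_of_bounded measure_Ioc_lt_top.ne hfm (ae_of_all _ hf)

end BoundedFactor

section RandomVariable

variable {Ω : Type*} [MeasurableSpace Ω] {μ : Measure Ω}

lemma aemeasurable_indicator_Ici_comp_fst {ν : Measure ℝ} [SFinite ν] {X : Ω → ℝ}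
    (hX : AEMeasurable X μ) :
    AEMeasurable (fun p : Ω × ℝ => (Ici (X p.1)).indicator (1 : ℝ → ℝ) p.2) (μ.prod ν) := by
  have hstep : Measurable fun q : ℝ × ℝ => (Ici q.1).indicator (1 : ℝ → ℝ) q.2 :=
    measurable_const.indicator (measurableSet_le measurable_fst measurable_snd)
  exact hstep.comp_aemeasurable (hX.comp_fst.prodMk measurable_snd.aemeasurable)

lemma integrable_prod_indicator_Ici_sub_indicator_Ici_mul [SFinite μ] {X Y : Ω → ℝ}
    (hX : Integrable X μ) (hY : Integrable Y μ) {f : ℝ → ℝ} {C : ℝ}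
    (hfm : AEStronglyMeasurable f) (hf : ∀ x, |f x| ≤ C) :
    Integrable (fun p : Ω × ℝ =>
      ((Ici (X p.1)).indicator 1 p.2 - (Ici (Y p.1)).indicator 1 p.2) * f p.2)
      (μ.prod volume) := by
  have hm : AEStronglyMeasurable (fun p : Ω × ℝ =>
      ((Ici (X p.1)).indicator 1 p.2 - (Ici (Y p.1)).indicator 1 p.2) * f p.2) (μ.prod volume) :=
    (((aemeasurable_indicator_Ici_comp_fst hX.aemeasurable).sub
      (aemeasurable_indicator_Ici_comp_fst hY.aemeasurable)).aestronglyMeasurable).mul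
      hfm.comp_snd
  refine (integrable_prod_iff hm).2 ⟨ae_of_all _ fun ω => ?_, ?_⟩
  · exact integrable_indicator_Ici_sub_indicator_Ici_mul hfm hf (X ω) (Y ω)
  · refine ((hX.sub hY).abs.const_mul C).mono' hm.norm.integral_prod_right'
      (ae_of_all _ fun ω => ?_)
    have hbound := integral_norm_indicator_Ici_sub_indicator_Ici_mul_le hfm hf (X ω) (Y ω)
    rwa [Real.norm_of_nonneg (integral_nonneg fun _ => norm_nonneg _)]

lemma integral_indicator_Ici_comp {X : Ω → ℝ} (hX : AEMeasurable X μ) (x : ℝ) :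
    ∫ ω, (Ici (X ω)).indicator (1 : ℝ → ℝ) x ∂μ = μ.real (X ⁻¹' Iic x) := by
  change ∫ ω, (Iic x).indicator 1 (X ω) ∂μ = _
  rw [← integral_map (f := (Iic x).indicator 1) hX
      (measurable_const.indicator measurableSet_Iic).aestronglyMeasurable,
    integral_indicator_one measurableSet_Iic,
    map_measureReal_apply_of_aemeasurable hX measurableSet_Iic]

variable [IsFiniteMeasure μ]

lemma integrable_indicator_Ici_comp {X : Ω → ℝ} (hX : AEMeasurable X μ) (x : ℝ) :
    Integrable (fun ω => (Ici (X ω)).indicator (1 : ℝ → ℝ) x) μ :=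
  .of_bound
    ((measurable_const.indicator measurableSet_Iic).comp_aemeasurable hX).aestronglyMeasurable 1
    (ae_of_all _ fun _ => (norm_indicator_le_norm_self 1 x).trans_eq norm_one)

lemma LipschitzWith.integrable_comp {E F : Type*} [NormedAddCommGroup E] [NormedAddCommGroup F]
    {K} {g : E → F} {X : Ω → E} (hg : LipschitzWith K g)
    (hX : Integrable X μ) : Integrable (fun ω => g (X ω)) μ := by
  have hg₀ : LipschitzWith (K + 0) fun y => g y - g 0 := hg.sub (LipschitzWith.const (g 0))
  have hg₀X : Integrable ((fun y => g y - g 0) ∘ X) μ :=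
    memLp_one_iff_integrable.1 (hg₀.comp_memLp (sub_self _) (memLp_one_iff_integrable.2 hX))
  refine (hg₀X.add (integrable_const (g 0))).congr (ae_of_all _ fun ω => ?_)
  simp only [Pi.add_apply, Function.comp_apply, sub_add_cancel]

end RandomVariable

lemma lipschitzWith_of_abs_deriv_le {g : ℝ → ℝ} {C : ℝ} (hg : ∀ x, DifferentiableAt ℝ g x)
    (hbd : ∀ x, |deriv g x| ≤ C) : LipschitzWith C.toNNReal g :=
  lipschitzWith_of_nnnorm_deriv_le hg fun x =>
    NNReal.coe_le_coe.1 ((hbd x).trans (Real.le_coe_toNNReal C))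

/-- If `A`, `B` are integrable random variables with CDFs `F_A`, `F_B` and `g : ℝ → ℝ` is
differentiable everywhere with measurable bounded derivative, then
`x ↦ (F_A x − F_B x) · g' x` is Lebesgue integrable and
`𝔼[g B] − 𝔼[g A] = ∫ (F_A x − F_B x) · g' x dx`. -/
theorem stmt2 {Ω : Type*} [MeasurableSpace Ω] (ℙ : Measure Ω) [IsProbabilityMeasure ℙ]
    (A B : Ω → ℝ) (hA : Integrable A ℙ) (hB : Integrable B ℙ)
    (g : ℝ → ℝ) (hg : ∀ x, DifferentiableAt ℝ g x)
    (hmeas : Measurable (deriv g)) (C : ℝ) (hbd : ∀ x, |deriv g x| ≤ C) :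
    Integrable (fun x : ℝ =>
      ((ℙ (A ⁻¹' Set.Iic x)).toReal - (ℙ (B ⁻¹' Set.Iic x)).toReal) * deriv g x) ∧
    (∫ ω, g (B ω) ∂ℙ) - (∫ ω, g (A ω) ∂ℙ) =
      ∫ x : ℝ,
        ((ℙ (A ⁻¹' Set.Iic x)).toReal - (ℙ (B ⁻¹' Set.Iic x)).toReal) * deriv g x := by
  set F : Ω × ℝ → ℝ := fun p =>
    ((Ici (A p.1)).indicator 1 p.2 - (Ici (B p.1)).indicator 1 p.2) * deriv g p.2
  have hF : Integrable F (ℙ.prod volume) :=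
    integrable_prod_indicator_Ici_sub_indicator_Ici_mul hA hB hmeas.aestronglyMeasurable hbd
  have hF_x : ∀ x, ∫ ω, F (ω, x) ∂ℙ =
      ((ℙ (A ⁻¹' Iic x)).toReal - (ℙ (B ⁻¹' Iic x)).toReal) * deriv g x := fun x => by
    simp only [F]
    rw [integral_mul_const, integral_sub (integrable_indicator_Ici_comp hA.aemeasurable x)
      (integrable_indicator_Ici_comp hB.aemeasurable x),
      integral_indicator_Ici_comp hA.aemeasurable, integral_indicator_Ici_comp hB.aemeasurable,
      measureReal_def, measureReal_def]
  have hF_ω : ∀ ω, ∫ x, F (ω, x) = g (B ω) - g (A ω) := fun ω => by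
    simp only [F]
    have hint := intervalIntegrable_of_abs_le hmeas.aestronglyMeasurable hbd (A ω) (B ω)
    rw [integral_indicator_Ici_sub_indicator_Ici_mul hint]
    exact intervalIntegral.integral_eq_sub_of_hasDerivAt (fun x _ => (hg x).hasDerivAt) hint
  have hLip := lipschitzWith_of_abs_deriv_le hg hbd
  refine ⟨hF.integral_prod_right.congr (ae_of_all _ hF_x), ?_⟩
  rw [← integral_sub (hLip.integrable_comp hB) (hLip.integrable_comp hA)]
  simp_rw [← hF_ω, ← hF_x]
  exact integral_integral_swap hF
end

section
/- Let (Ω, ℱ, ℙ) be a probability space and let Y : ℝ × Ω → ℝ be jointly measurable such that for every ω ∈ Ω the map x ↦ Y(x, ω) is differentiable with derivative D(x, ω), where D : ℝ × Ω → ℝ is jointly measurable and |D(x, ω)| ≤ C for all x, ω and some constant C. Let A, B : Ω → ℝ be integrable random variables such that for every x ∈ ℝ the random variables ω ↦ 𝟙_{[A(ω),∞)}(x) − 𝟙_{[B(ω),∞)}(x) and ω ↦ D(x, ω) are independent. Then ω ↦ Y(B(ω), ω) − Y(A(ω), ω) is integrable, x ↦ (F_A(x) − F_B(x))·𝔼[D(x,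 ·)] is Lebesgue integrable on ℝ, and 𝔼[Y(B(·), ·) − Y(A(·), ·)] = ∫_ℝ (F_A(x) − F_B(x))·𝔼[D(x, ·)] dx. -/
/-!
Put `g(x, ω) = 𝟙[A ω ≤ x] − 𝟙[B ω ≤ x]`, which is `±1` between `A ω` and `B ω` and `0`
elsewhere. For fixed `ω` the fundamental theorem of calculus gives
`∫ D(x, ω) g(x, ω) dx = Y(B ω, ω) − Y(A ω, ω)`; for fixed `x` independence gives
`𝔼[D(x, ·) g(x, ·)] = 𝔼[g(x, ·)] 𝔼[D(x, ·)] = (F_A(x) − F_B(x)) 𝔼[D(x, ·)]`.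
Since `|D g| ≤ C |g|` and `∫ |g(x, ω)| dx = |B ω − A ω|` is integrable in `ω`, Fubini's theorem
identifies the two iterated integrals.
-/

open MeasureTheory Set ProbabilityTheory

noncomputable def stepDiff (a b x : ℝ) : ℝ :=
  (Ici a).indicator (fun _ => 1) x - (Ici b).indicator (fun _ => 1) x

theorem measurable_stepDiff : Measurable fun p : ℝ × ℝ × ℝ => stepDiff p.1 p.2.1 p.2.2 := by
  simp only [stepDiff, indicator_apply, mem_Ici]
  exact (measurable_const.ite (measurableSet_le (by fun_prop) (by fun_prop)) measurable_const).sub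
    (measurable_const.ite (measurableSet_le (by fun_prop) (by fun_prop)) measurable_const)

theorem mul_stepDiff_eq_indicator_sub (f : ℝ → ℝ) (a b x : ℝ) :
    f x * stepDiff a b x = (Ico a b).indicator f x - (Ico b a).indicator f x := by
  by_cases ha : a ≤ x <;> by_cases hb : b ≤ x <;>
    simp [stepDiff, ha, hb, not_le.1]

theorem integral_mul_stepDiff_eq_sub {f f' : ℝ → ℝ} {a b : ℝ}
    (hf : ∀ x ∈ uIcc a b, HasDerivAt f (f' x) x) (hf' : IntervalIntegrable f' volume a b) :
    ∫ x, f' x * stepDiff a b x = f b - f a := by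
  have hab : IntegrableOn f' (Ico a b) := by
    rw [IntegrableOn, restrict_Ico_eq_restrict_Ioc]; exact hf'.1
  have hba : IntegrableOn f' (Ico b a) := by
    rw [IntegrableOn, restrict_Ico_eq_restrict_Ioc]; exact hf'.2
  simp_rw [mul_stepDiff_eq_indicator_sub]
  rw [integral_sub (hab.integrable_indicator measurableSet_Ico)
      (hba.integrable_indicator measurableSet_Ico),
    integral_indicator measurableSet_Ico, integral_indicator measurableSet_Ico,
    restrict_Ico_eq_restrict_Ioc, restrict_Ico_eq_restrict_Ioc, ← intervalIntegral,
    intervalIntegral.integral_eq_sub_of_hasDerivAt hf hf']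

theorem abs_stepDiff (a b x : ℝ) : |stepDiff a b x| = stepDiff (min a b) (max a b) x := by
  by_cases ha : a ≤ x <;> by_cases hb : b ≤ x <;> simp [stepDiff, ha, hb]

theorem integrable_stepDiff (a b : ℝ) : Integrable (stepDiff a b) := by
  have h : stepDiff a b = fun x => (Ico a b).indicator 1 x - (Ico b a).indicator 1 x := by
    ext x; simpa using mul_stepDiff_eq_indicator_sub 1 a b x
  rw [h]
  exact ((integrableOn_const measure_Ico_lt_top.ne).integrable_indicator measurableSet_Ico).sub
    ((integrableOn_const measure_Ico_lt_top.ne).integrable_indicator measurableSet_Ico)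

theorem integral_abs_stepDiff (a b : ℝ) : ∫ x, |stepDiff a b x| = |b - a| := by
  simp_rw [abs_stepDiff, ← max_sub_min_eq_abs]
  simpa using integral_mul_stepDiff_eq_sub (f := id) (f' := fun _ => 1) (a := min a b)
    (b := max a b) (fun x _ => hasDerivAt_id x) intervalIntegrable_const

section

variable {Ω : Type*} [MeasurableSpace Ω] {μ : Measure Ω} {A B : Ω → ℝ}

theorem integrable_stepDiff_comp_prod [SFinite μ] (hA : Integrable A μ)
    (hB : Integrable B μ) :
    Integrable (fun p : ℝ × Ω => stepDiff (A p.2) (B p.2) p.1) (volume.prod μ) := by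
  have hmeas : AEStronglyMeasurable (fun p : ℝ × Ω => stepDiff (A p.2) (B p.2) p.1)
      (volume.prod μ) :=
    (measurable_stepDiff.comp_aemeasurable (hA.1.aemeasurable.comp_snd.prodMk
      (hB.1.aemeasurable.comp_snd.prodMk measurable_fst.aemeasurable))).aestronglyMeasurable
  refine (integrable_prod_iff' hmeas).2
    ⟨ae_of_all _ fun ω => integrable_stepDiff (A ω) (B ω), ?_⟩
  simp only [Real.norm_eq_abs, integral_abs_stepDiff]
  exact (hB.sub hA).abs

theorem integral_stepDiff_comp [IsFiniteMeasure μ] (hA : AEMeasurable A μ)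
    (hB : AEMeasurable B μ) (x : ℝ) :
    ∫ ω, stepDiff (A ω) (B ω) x ∂μ = μ.real (A ⁻¹' Iic x) - μ.real (B ⁻¹' Iic x) := by
  have hind : ∀ (Z : Ω → ℝ) ω,
      (Ici (Z ω)).indicator (fun _ => (1 : ℝ)) x = (Z ⁻¹' Iic x).indicator 1 ω := fun Z ω => by
    simp only [indicator, mem_Ici, mem_preimage, mem_Iic, Pi.one_apply]
  have hA' := hA.nullMeasurable (measurableSet_Iic (a := x))
  have hB' := hB.nullMeasurable (measurableSet_Iic (a := x))
  simp only [stepDiff, hind A, hind B]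
  rw [integral_sub ((integrable_const 1).indicator₀ hA') ((integrable_const 1).indicator₀ hB'),
    integral_indicator₀ hA', integral_indicator₀ hB']
  simp

theorem integral_mul_stepDiff_comp_of_indepFun [IsFiniteMeasure μ] {Z : Ω → ℝ}
    (hA : AEMeasurable A μ) (hB : AEMeasurable B μ) (hZ : AEStronglyMeasurable Z μ) {x : ℝ}
    (hindep : IndepFun (fun ω => stepDiff (A ω) (B ω) x) Z μ) :
    ∫ ω, Z ω * stepDiff (A ω) (B ω) x ∂μ =
      (μ.real (A ⁻¹' Iic x) - μ.real (B ⁻¹' Iic x)) * ∫ ω, Z ω ∂μ := by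
  have hmeas : AEStronglyMeasurable (fun ω => stepDiff (A ω) (B ω) x) μ :=
    (measurable_stepDiff.comp_aemeasurable
      (hA.prodMk (hB.prodMk aemeasurable_const))).aestronglyMeasurable
  simp_rw [mul_comm (Z _)]
  rw [← integral_stepDiff_comp hA hB]
  exact hindep.integral_mul_eq_mul_integral hmeas hZ

end

theorem stmt3_general {Ω : Type*} [MeasurableSpace Ω] (μ : Measure Ω) [IsProbabilityMeasure μ]
    (Y D : ℝ → Ω → ℝ)
    (hderiv : ∀ ω x, HasDerivAt (fun x => Y x ω) (D x ω) x)
    (hDmeas : Measurable (fun p : ℝ × Ω => D p.1 p.2))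
    (C : ℝ) (hbd : ∀ x ω, |D x ω| ≤ C)
    (A B : Ω → ℝ) (hA : Integrable A μ) (hB : Integrable B μ)
    (hindep : ∀ x : ℝ, IndepFun
      (fun ω => Set.indicator (Set.Ici (A ω)) (fun _ => (1 : ℝ)) x
        - Set.indicator (Set.Ici (B ω)) (fun _ => (1 : ℝ)) x)
      (fun ω => D x ω) μ) :
    Integrable (fun ω => Y (B ω) ω - Y (A ω) ω) μ ∧
    Integrable (fun x : ℝ =>
      ((μ (A ⁻¹' Set.Iic x)).toReal - (μ (B ⁻¹' Set.Iic x)).toReal) * ∫ ω, D x ω ∂μ) ∧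
    (∫ ω, (Y (B ω) ω - Y (A ω) ω) ∂μ) =
      ∫ x : ℝ,
        ((μ (A ⁻¹' Set.Iic x)).toReal - (μ (B ⁻¹' Set.Iic x)).toReal) * ∫ ω, D x ω ∂μ := by
  have hF : Integrable (fun p : ℝ × Ω => D p.1 p.2 * stepDiff (A p.2) (B p.2) p.1)
      (volume.prod μ) :=
    (integrable_stepDiff_comp_prod hA hB).bdd_mul hDmeas.aestronglyMeasurable
      (ae_of_all _ fun p => hbd p.1 p.2)
  have hFTC : ∀ ω, ∫ x, D x ω * stepDiff (A ω) (B ω) x = Y (B ω) ω - Y (A ω) ω := fun ω =>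
    integral_mul_stepDiff_eq_sub (fun x _ => hderiv ω x)
      (intervalIntegrable_const.mono_fun'
        (hDmeas.comp measurable_prodMk_right).aestronglyMeasurable (ae_of_all _ fun x => hbd x ω))
  have hcdf : ∀ x, ∫ ω, D x ω * stepDiff (A ω) (B ω) x ∂μ =
      ((μ (A ⁻¹' Iic x)).toReal - (μ (B ⁻¹' Iic x)).toReal) * ∫ ω, D x ω ∂μ := fun x =>
    integral_mul_stepDiff_comp_of_indepFun hA.1.aemeasurable hB.1.aemeasurable
      (hDmeas.comp measurable_prodMk_left).aestronglyMeasurable (hindep x)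
  refine ⟨?_, ?_, ?_⟩
  · simpa only [hFTC] using hF.integral_prod_right
  · simpa only [hcdf] using hF.integral_prod_left
  · simp_rw [← hFTC, ← hcdf]
    exact (integral_integral_swap hF).symm

/-- Identification equation of Theorem 3.1 (covariate-free form): if the potential outcome
process `Y (x, ω)` is jointly measurable with jointly measurable, uniformly bounded partial
derivative `D (x, ω)`, and for every `x` the indicator difference
`ω ↦ 𝟙_{[A ω,∞)}(x) − 𝟙_{[B ω,∞)}(x)` is independent of `ω ↦ D (x, ω)`, then
`𝔼[Y(B) − Y(A)] = ∫ (F_A(x) − F_B(x)) · 𝔼[D(x,·)] dx`, all quantities being integrable. -/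
theorem stmt3 {Ω : Type*} [MeasurableSpace Ω] (μ : Measure Ω) [IsProbabilityMeasure μ]
    (Y D : ℝ → Ω → ℝ)
    (hYmeas : Measurable (fun p : ℝ × Ω => Y p.1 p.2))
    (hderiv : ∀ ω x, HasDerivAt (fun x => Y x ω) (D x ω) x)
    (hDmeas : Measurable (fun p : ℝ × Ω => D p.1 p.2))
    (C : ℝ) (hbd : ∀ x ω, |D x ω| ≤ C)
    (A B : Ω → ℝ) (hA : Integrable A μ) (hB : Integrable B μ)
    (hindep : ∀ x : ℝ, IndepFun
      (fun ω => Set.indicator (Set.Ici (A ω)) (fun _ => (1 : ℝ)) x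
        - Set.indicator (Set.Ici (B ω)) (fun _ => (1 : ℝ)) x)
      (fun ω => D x ω) μ) :
    Integrable (fun ω => Y (B ω) ω - Y (A ω) ω) μ ∧
    Integrable (fun x : ℝ =>
      ((μ (A ⁻¹' Set.Iic x)).toReal - (μ (B ⁻¹' Set.Iic x)).toReal) * ∫ ω, D x ω ∂μ) ∧
    (∫ ω, (Y (B ω) ω - Y (A ω) ω) ∂μ) =
      ∫ x : ℝ,
        ((μ (A ⁻¹' Set.Iic x)).toReal - (μ (B ⁻¹' Set.Iic x)).toReal) * ∫ ω, D x ω ∂μ :=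
  stmt3_general μ Y D hderiv hDmeas C hbd A B hA hB hindep
end

section
/- Let (Ω, ℱ, ℙ) be a probability space and (Θ, d) a nonempty compact metric space. Let Q_n : Ω → (Θ → ℝ) be a sequence of random functions and Q : Θ → ℝ a function such that: (i) for each n and θ, ω ↦ Q_n(ω)(θ) is measurable; (ii) there exist v > 0 and measurable B_n : Ω → ℝ≥0 with |Q_n(ω)(θ) − Q_n(ω)(θ')| ≤ B_n(ω)·d(θ, θ')^v for all ω, n, θ, θ'; (iii) the sequence B_n is bounded in probability, i.e. for every ε > 0 there exists M > 0 with ℙ(B_n > M) ≤ ε for all n; (iv) for each θ ∈ Θ, Q_n(·)(θ) converges to the constant Q(θ) in probability, i.e. for every δ > 0, ℙ(|Q_n(θ) − Q(θ)| > δ) → 0 as n → ∞. Then Q is continuous on Θ, and sup_{θ ∈ Θ} |Q_n(ω)(θ) − Q(θ)| converges to 0 in probability, i.e. for every δ > 0, ℙ(sup_{θ ∈ Θ} |Q_n(θ) − Q(θ)| > δ) → 0 as n → ∞. -/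
open MeasureTheory Filter Topology
open scoped ENNReal

/-!
Fix `M` with `ℙ(B_n > M) ≤ 1/2` for all `n`. For any `θ, θ'` and `ε > 0` there is, for large `n`,
an `ω` at which `B_n ≤ M` and both `Q_n(θ)`, `Q_n(θ')` are `ε`-close to their limits; hence
`|Q(θ) - Q(θ')| ≤ M d(θ, θ')^v`, so `Q` is Hölder and in particular continuous. Off the event
`{B_n > M'}` the difference `Q_n - Q` is Hölder with constant `M' + M`, so its supremum over `Θ`
is controlled by its values on a finite `η`-net, and a union bound over the net finishes.
-/

section Metric

variable {Θ : Type*} [PseudoMetricSpace Θ]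

theorem continuous_of_abs_sub_le_mul_rpow {f : Θ → ℝ} {M v : ℝ} (hv : 0 < v)
    (hf : ∀ x y, |f x - f y| ≤ M * dist x y ^ v) : Continuous f := by
  refine continuous_iff_continuousAt.2 fun x => tendsto_iff_dist_tendsto_zero.2 ?_
  have h : Tendsto (fun y => M * dist y x ^ v) (𝓝 x) (𝓝 (M * dist x x ^ v)) :=
    (((continuous_id.dist continuous_const).tendsto x).rpow_const (Or.inr hv.le)).const_mul M
  rw [dist_self, Real.zero_rpow hv.ne', mul_zero] at h
  exact squeeze_zero (fun _ => dist_nonneg) (fun y => (Real.dist_eq _ _).trans_le (hf y x)) h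

theorem exists_pos_mul_rpow_le (K : ℝ) {c v : ℝ} (hc : 0 < c) (hv : 0 < v) :
    ∃ η > 0, K * η ^ v ≤ c := by
  have h : Tendsto (fun η : ℝ => K * η ^ v) (𝓝[>] 0) (𝓝 0) := by
    simpa [Real.zero_rpow hv.ne'] using
      ((Real.continuousAt_rpow_const 0 v (Or.inr hv.le)).tendsto.const_mul K).mono_left
        nhdsWithin_le_nhds
  obtain ⟨η, hηc, hη⟩ := ((h.eventually (gt_mem_nhds hc)).and self_mem_nhdsWithin).exists
  exact ⟨η, hη, hηc.le⟩

theorem abs_le_add_mul_rpow_of_cover {F : Θ → ℝ} {K v η a : ℝ} {t : Finset Θ}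
    (hK : 0 ≤ K) (hv : 0 ≤ v) (hF : ∀ x y, |F x - F y| ≤ K * dist x y ^ v)
    (hcover : Set.univ ⊆ ⋃ y ∈ t, Metric.ball y η) (ht : ∀ y ∈ t, |F y| ≤ a) (x : Θ) :
    |F x| ≤ a + K * η ^ v := by
  obtain ⟨y, hy, hxy⟩ := Set.mem_iUnion₂.1 (hcover (Set.mem_univ x))
  have hdist : dist x y ^ v ≤ η ^ v := Real.rpow_le_rpow dist_nonneg (Metric.mem_ball.1 hxy).le hv
  calc |F x| ≤ |F y| + |F x - F y| := by linarith [abs_sub_abs_le_abs_sub (F x) (F y)]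
    _ ≤ a + K * η ^ v := add_le_add (ht y hy) ((hF x y).trans (by gcongr))

end Metric

section Measure

variable {Ω : Type*} [MeasurableSpace Ω] {μ : Measure Ω}

theorem abs_sub_le_mul_of_tendsto_measure [IsProbabilityMeasure μ] {X Y C : ℕ → Ω → ℝ}
    {a b c M : ℝ} {p : ℝ≥0∞} (hp : p < 1) (hc : 0 ≤ c)
    (hXY : ∀ n ω, |X n ω - Y n ω| ≤ C n ω * c) (hC : ∀ n, μ {ω | M < C n ω} ≤ p)
    (hX : ∀ δ : ℝ, 0 < δ → Tendsto (fun n => μ {ω | δ < |X n ω - a|}) atTop (𝓝 0))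
    (hY : ∀ δ : ℝ, 0 < δ → Tendsto (fun n => μ {ω | δ < |Y n ω - b|}) atTop (𝓝 0)) :
    |a - b| ≤ M * c := by
  refine le_of_forall_pos_le_add fun ε hε => ?_
  have hsum := (hX (ε / 2) (half_pos hε)).add (hY (ε / 2) (half_pos hε))
  rw [add_zero] at hsum
  obtain ⟨n, hn⟩ := (hsum.eventually_lt_const (tsub_pos_of_lt hp)).exists
  have hbad : μ ({ω | M < C n ω} ∪ ({ω | ε / 2 < |X n ω - a|} ∪ {ω | ε / 2 < |Y n ω - b|})) < 1 :=
    calc _ ≤ p + (μ {ω | ε / 2 < |X n ω - a|} + μ {ω | ε / 2 < |Y n ω - b|}) :=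
          (measure_union_le _ _).trans (add_le_add (hC n) (measure_union_le _ _))
      _ < p + (1 - p) := ENNReal.add_lt_add_left (ne_top_of_lt hp) hn
      _ = 1 := add_tsub_cancel_of_le hp.le
  obtain ⟨ω, hω⟩ := (Set.ne_univ_iff_exists_notMem _).1
    (ne_of_apply_ne μ (hbad.trans_eq measure_univ.symm).ne)
  simp only [Set.mem_union, Set.mem_ofPred_eq, not_or, not_lt] at hω
  obtain ⟨hCω, hXω, hYω⟩ := hω
  have hXYω := (hXY n ω).trans (mul_le_mul_of_nonneg_right hCω hc)
  rw [abs_le] at hXω hYω hXYω ⊢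
  constructor <;> linarith

theorem measure_lt_iSup_abs_sub_le {Θ : Type*} [PseudoMetricSpace Θ] {X : Ω → Θ → ℝ}
    {g : Θ → ℝ} {B : Ω → ℝ} {M Mg v η δ : ℝ} {t : Finset Θ}
    (hM : 0 ≤ M) (hMg : 0 ≤ Mg) (hv : 0 ≤ v) (hδ : 0 ≤ δ)
    (hX : ∀ ω x y, |X ω x - X ω y| ≤ B ω * dist x y ^ v)
    (hg : ∀ x y, |g x - g y| ≤ Mg * dist x y ^ v)
    (hcover : Set.univ ⊆ ⋃ y ∈ t, Metric.ball y η) (hη : (M + Mg) * η ^ v ≤ δ / 2) :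
    μ {ω | δ < ⨆ x, |X ω x - g x|} ≤
      μ {ω | M < B ω} + ∑ y ∈ t, μ {ω | δ / 2 < |X ω y - g y|} := by
  have hsub : {ω | δ < ⨆ x, |X ω x - g x|} ⊆
      {ω | M < B ω} ∪ ⋃ y ∈ t, {ω | δ / 2 < |X ω y - g y|} := by
    intro ω hω
    by_contra hgood
    simp only [Set.mem_union, Set.mem_iUnion, Set.mem_ofPred_eq, not_or, not_exists, not_lt,
      exists_prop, not_and] at hgood
    obtain ⟨hBω, hnet⟩ := hgood
    have hF : ∀ x y, |(X ω x - g x) - (X ω y - g y)| ≤ (M + Mg) * dist x y ^ v := fun x y => by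
      have hd : 0 ≤ dist x y ^ v := Real.rpow_nonneg dist_nonneg v
      calc |(X ω x - g x) - (X ω y - g y)| ≤ |X ω x - X ω y| + |g x - g y| := by
            rw [sub_sub_sub_comm]; exact abs_sub _ _
        _ ≤ M * dist x y ^ v + Mg * dist x y ^ v :=
            add_le_add ((hX ω x y).trans (mul_le_mul_of_nonneg_right hBω hd)) (hg x y)
        _ = (M + Mg) * dist x y ^ v := by ring
    have hsup : ⨆ x, |X ω x - g x| ≤ δ := Real.iSup_le (fun x =>
      (abs_le_add_mul_rpow_of_cover (add_nonneg hM hMg) hv hF hcover hnet x).trans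
        (by linarith)) hδ
    exact hsup.not_gt hω
  calc _ ≤ μ ({ω | M < B ω} ∪ ⋃ y ∈ t, {ω | δ / 2 < |X ω y - g y|}) := measure_mono hsub
    _ ≤ _ := (measure_union_le _ _).trans (add_le_add le_rfl (measure_biUnion_finset_le _ _))

end Measure

theorem stmt11_general {Ω : Type*} [MeasurableSpace Ω] (ℙ : Measure Ω) [IsProbabilityMeasure ℙ]
    {Θ : Type*} [MetricSpace Θ] [CompactSpace Θ]
    (Qn : ℕ → Ω → Θ → ℝ) (Q : Θ → ℝ)
    (v : ℝ) (hv : 0 < v)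
    (B : ℕ → Ω → ℝ)
    (hHolder : ∀ n ω θ θ', |Qn n ω θ - Qn n ω θ'| ≤ B n ω * dist θ θ' ^ v)
    (hBop : ∀ ε : ℝ, 0 < ε → ∃ M : ℝ, 0 < M ∧
      ∀ n, ℙ {ω | M < B n ω} ≤ ENNReal.ofReal ε)
    (hptwise : ∀ θ : Θ, ∀ δ : ℝ, 0 < δ →
      Tendsto (fun n => ℙ {ω | δ < |Qn n ω θ - Q θ|}) atTop (nhds 0)) :
    Continuous Q ∧
    ∀ δ : ℝ, 0 < δ →
      Tendsto (fun n => ℙ {ω | δ < ⨆ θ : Θ, |Qn n ω θ - Q θ|}) atTop (nhds 0) := by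
  obtain ⟨MQ, hMQ, hBMQ⟩ := hBop (1 / 2) one_half_pos
  have hhalf : ENNReal.ofReal (1 / 2) < 1 := by norm_num
  have hQ : ∀ θ θ', |Q θ - Q θ'| ≤ MQ * dist θ θ' ^ v := fun θ θ' =>
    abs_sub_le_mul_of_tendsto_measure hhalf (Real.rpow_nonneg dist_nonneg v)
      (fun n ω => hHolder n ω θ θ') hBMQ (hptwise θ) (hptwise θ')
  refine ⟨continuous_of_abs_sub_le_mul_rpow hv hQ,
    fun δ hδ => ENNReal.tendsto_nhds_zero.2 fun ε hε => ?_⟩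
  obtain ⟨r, -, hr, hrε⟩ := ENNReal.lt_iff_exists_real_btwn.1 hε
  obtain ⟨M, hM, hBM⟩ := hBop r (ENNReal.ofReal_pos.1 hr)
  obtain ⟨η, hη, hηδ⟩ := exists_pos_mul_rpow_le (M + MQ) (half_pos hδ) hv
  obtain ⟨t, -, hcover⟩ :=
    isCompact_univ.elim_nhds_subcover (fun θ : Θ => Metric.ball θ η) fun θ _ => Metric.ball_mem_nhds θ hη
  have hnet : Tendsto (fun n => ∑ θ ∈ t, ℙ {ω | δ / 2 < |Qn n ω θ - Q θ|}) atTop (𝓝 0) := by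
    simpa using tendsto_finsetSum t fun θ _ => hptwise θ (δ / 2) (half_pos hδ)
  filter_upwards [hnet.eventually_lt_const (tsub_pos_of_lt hrε)] with n hn
  calc _ ≤ ℙ {ω | M < B n ω} + ∑ θ ∈ t, ℙ {ω | δ / 2 < |Qn n ω θ - Q θ|} :=
        measure_lt_iSup_abs_sub_le hM.le hMQ.le hv.le hδ.le (hHolder n) hQ hcover hηδ
    _ ≤ ENNReal.ofReal r + (ε - ENNReal.ofReal r) := add_le_add (hBM n) hn.le
    _ = ε := add_tsub_cancel_of_le hrε.le

/-- Uniform convergence lemma (Newey–Powell, Lemma B.1): on a nonempty compact metric space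
`Θ`, if the random criterion functions `Qn n ω` are measurable in `ω`, satisfy a stochastic
Hölder condition with exponent `v > 0` and coefficients `B n` bounded in probability, and
converge pointwise in probability to `Q`, then `Q` is continuous and
`sup_θ |Qn n ω θ − Q θ| → 0` in probability. -/
theorem stmt11 {Ω : Type*} [MeasurableSpace Ω] (ℙ : Measure Ω) [IsProbabilityMeasure ℙ]
    {Θ : Type*} [MetricSpace Θ] [CompactSpace Θ] [Nonempty Θ]
    (Qn : ℕ → Ω → Θ → ℝ) (Q : Θ → ℝ)
    (hmeas : ∀ n θ, Measurable (fun ω => Qn n ω θ))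
    (v : ℝ) (hv : 0 < v)
    (B : ℕ → Ω → ℝ) (hBmeas : ∀ n, Measurable (B n)) (hBnonneg : ∀ n ω, 0 ≤ B n ω)
    (hHolder : ∀ n ω θ θ', |Qn n ω θ - Qn n ω θ'| ≤ B n ω * dist θ θ' ^ v)
    (hBop : ∀ ε : ℝ, 0 < ε → ∃ M : ℝ, 0 < M ∧
      ∀ n, ℙ {ω | M < B n ω} ≤ ENNReal.ofReal ε)
    (hptwise : ∀ θ : Θ, ∀ δ : ℝ, 0 < δ →
      Tendsto (fun n => ℙ {ω | δ < |Qn n ω θ - Q θ|}) atTop (nhds 0)) :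
    Continuous Q ∧
    ∀ δ : ℝ, 0 < δ →
      Tendsto (fun n => ℙ {ω | δ < ⨆ θ : Θ, |Qn n ω θ - Q θ|}) atTop (nhds 0) :=
  stmt11_general ℙ Qn Q v hv B hHolder hBop hptwise
end
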